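/- Let s ≥ 2, n − s odd, l_1, ..., l_s nonzero integers, o_1, ..., o_{n-s} odd with |o_i| ≥ 3, α = ∑ sign(o_i), β = sign(2l_1), p_1 = 2l_1, p_1' = sign(p_1)(|p_1| − 1). Define (denominators cleared) G(z) = (∏_{i=2}^s (−l_i))·z^{s−1}·[ −((α+β)/2)·z·∇_{p_1}·∏_j ∇_{o_j} + ∇_{p_1'}·∏_j ∇_{o_j} + ∇_{p_1}·∑_j ∇_{o_j'}·∏_{k≠j}∇_{o_k} ] + ( ∑_{i=2}^s ∏_{j≥2, j≠i}(−l_j) )·z^{s−2}. If α + β ≠ 0 then deg G = (s − 1) + |p_1| + ∑_j (|o_j| − 1) with leading coefficient −((α+β)/2)·sign(p_1)·∏_{i=2}^s(−l_i), where sign(p_1) is the leading coefficient of ∇_{p_1} = ∇_{2l_1}, namely 1 if l_1 > 0 and −1 if l_1 < 0. -/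

import Mathlib

open Polynomial Finset

/-- Conway polynomial of the (2,m) torus link: ∇₀=0, ∇₁=1, ∇ₘ = z∇ₘ₋₁ + ∇ₘ₋₂. -/
noncomputable def conway : ℕ → Polynomial ℤ
  | 0 => 0
  | 1 => 1
  | (m+2) => X * conway (m+1) + conway m

/-- Signed extension: ∇₋ₘ = (-1)^(m+1) ∇ₘ. -/
noncomputable def conwayZ (m : ℤ) : Polynomial ℤ :=
  if 0 ≤ m then conway m.toNat else (-1) ^ (m.natAbs + 1) * conway m.natAbs

lemma conway_monic_deg : ∀ m : ℕ, (conway (m+1)).Monic ∧ (conway (m+1)).natDegree = m := by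
  intro m
  induction m using Nat.strong_induction_on with
  | _ m ih =>
    match m with
    | 0 => exact ⟨monic_one, by simp [conway]⟩
    | 1 =>
      have : conway 2 = X := by simp [conway]
      exact ⟨by rw [this]; exact monic_X, by rw [this]; simp⟩
    | (m+2) =>
      have h1 := ih (m+1) (by omega)
      have h0 := ih m (by omega)
      have hx : (X * conway (m+2)).Monic := monic_X.mul h1.1
      have hdx : (X * conway (m+2)).natDegree = m + 2 := by
        rw [natDegree_mul X_ne_zero h1.1.ne_zero, natDegree_X, h1.2]; omega
      have hlt : (conway (m+1)).degree < (X * conway (m+2)).degree :=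
        degree_lt_degree (by rw [hdx, h0.2]; omega)
      have heq : conway (m+3) = X * conway (m+2) + conway (m+1) := rfl
      refine ⟨?_, ?_⟩
      · rw [heq]; exact hx.add_of_left hlt
      · rw [heq, natDegree_add_eq_left_of_natDegree_lt (by rw [hdx, h0.2]; omega), hdx]

lemma conway_ne_zero {m : ℕ} (h : 1 ≤ m) : conway m ≠ 0 := by
  obtain ⟨k, rfl⟩ : ∃ k, m = k + 1 := ⟨m - 1, by omega⟩
  exact (conway_monic_deg k).1.ne_zero

lemma conwayZ_ne_zero {m : ℤ} (hm : m ≠ 0) : conwayZ m ≠ 0 := by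
  unfold conwayZ
  split
  · exact conway_ne_zero (by omega)
  · exact mul_ne_zero (pow_ne_zero _ (by simp)) (conway_ne_zero (by omega))

lemma conwayZ_natDegree {m : ℤ} (hm : m ≠ 0) : (conwayZ m).natDegree = m.natAbs - 1 := by
  unfold conwayZ
  have hfund : ∀ k : ℕ, 1 ≤ k → (conway k).natDegree = k - 1 := by
    intro k hk
    obtain ⟨j, rfl⟩ : ∃ j, k = j + 1 := ⟨k - 1, by omega⟩
    simpa using (conway_monic_deg j).2
  rcases le_or_gt 0 m with h | h
  · rw [if_pos h, hfund _ (by omega)]; omega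
  · rw [if_neg (by omega)]
    have : ((-1 : Polynomial ℤ) ^ (m.natAbs + 1)) = C ((-1 : ℤ) ^ (m.natAbs + 1)) := by
      simp
    rw [this, natDegree_C_mul (by simp [pow_ne_zero]), hfund _ (by omega)]

lemma conwayZ_natDegree_le (m : ℤ) : (conwayZ m).natDegree ≤ m.natAbs - 1 := by
  rcases eq_or_ne m 0 with rfl | hm
  · simp [conwayZ, conway]
  · exact (conwayZ_natDegree hm).le

lemma conwayZ_leadingCoeff_pos {m : ℤ} (hm : 0 < m) : (conwayZ m).leadingCoeff = 1 := by
  unfold conwayZ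
  rw [if_pos hm.le]
  obtain ⟨j, hj⟩ : ∃ j, m.toNat = j + 1 := ⟨m.toNat - 1, by omega⟩
  rw [hj]; exact (conway_monic_deg j).1

lemma conwayZ_leadingCoeff_neg {m : ℤ} (hm : m < 0) :
    (conwayZ m).leadingCoeff = (-1) ^ (m.natAbs + 1) := by
  unfold conwayZ
  rw [if_neg (by omega)]
  have : ((-1 : Polynomial ℤ) ^ (m.natAbs + 1)) = C ((-1 : ℤ) ^ (m.natAbs + 1)) := by simp
  rw [this, leadingCoeff_mul, leadingCoeff_C]
  obtain ⟨j, hj⟩ : ∃ j, m.natAbs = j + 1 := ⟨m.natAbs - 1, by omega⟩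
  rw [hj, (conway_monic_deg j).1, mul_one]

lemma conwayZ_leadingCoeff_odd {m : ℤ} (hm : Odd m) : (conwayZ m).leadingCoeff = 1 := by
  rcases lt_trichotomy m 0 with h | h | h
  · rw [conwayZ_leadingCoeff_neg h]
    have : Odd m.natAbs := Int.natAbs_odd.mpr hm
    obtain ⟨k, hk⟩ := this
    rw [hk]
    have : 2*k+1+1 = 2*(k+1) := by ring
    rw [this, pow_mul]; norm_num
  · exact absurd h (by rintro rfl; exact (Int.not_odd_iff_even.mpr Even.zero) hm)
  · exact conwayZ_leadingCoeff_pos h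

lemma conwayZ_leadingCoeff_even {m : ℤ} (hm : m ≠ 0) (he : Even m) :
    (conwayZ m).leadingCoeff = m.sign := by
  rcases lt_trichotomy m 0 with h | h | h
  · rw [conwayZ_leadingCoeff_neg h, Int.sign_eq_neg_one_of_neg h]
    have : Even m.natAbs := Int.natAbs_even.mpr he
    obtain ⟨k, hk⟩ := this
    rw [hk]
    have : k + k + 1 = 2*k+1 := by ring
    rw [this, pow_succ, pow_mul]; norm_num
  · exact absurd h hm
  · rw [conwayZ_leadingCoeff_pos h, Int.sign_eq_one_of_pos h]


/- Conway polynomial of the n-pretzel link in the n-s odd case of Theorem 5,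
denominators cleared, with p₁ = 2l₁, p₁' = sign(p₁)(|p₁|-1).  If α + β ≠ 0 then
deg G = (s-1) + |p₁| + ∑(|oⱼ|-1) with leading coefficient
-((α+β)/2)·sign(p₁)·∏_{i=2}^s(-lᵢ). -/
theorem pretzel_link_conway_degree_odd (n s : ℕ) (hs : 2 ≤ s) (hsn : s ≤ n)
    (hns : Odd (n - s))
    (l : ℕ → ℤ) (hl : ∀ i ∈ Finset.Icc 1 s, l i ≠ 0)
    (o : ℕ → ℤ) (ho : ∀ j ∈ Finset.Icc 1 (n - s), Odd (o j) ∧ 3 ≤ |o j|)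
    (α β : ℤ) (hα : α = ∑ j ∈ Finset.Icc 1 (n - s), (o j).sign)
    (hβ : β = (2 * l 1).sign) (h2 : 2 ∣ (α + β)) (h0 : α + β ≠ 0)
    (G : Polynomial ℤ)
    (hG : G = C (∏ i ∈ Finset.Icc 2 s, (- l i)) * X ^ (s - 1) *
        (- C ((α + β) / 2) * X * conwayZ (2 * l 1) * ∏ j ∈ Finset.Icc 1 (n - s), conwayZ (o j)
         + conwayZ ((2 * l 1).sign * (|2 * l 1| - 1)) * ∏ j ∈ Finset.Icc 1 (n - s), conwayZ (o j)
         + conwayZ (2 * l 1) * ∑ j ∈ Finset.Icc 1 (n - s),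
             conwayZ ((o j).sign * (|o j| - 1)) *
               ∏ k ∈ (Finset.Icc 1 (n - s)).erase j, conwayZ (o k))
      + C (∑ i ∈ Finset.Icc 2 s, ∏ j ∈ (Finset.Icc 2 s).erase i, (- l j)) * X ^ (s - 2)) :
    G.natDegree = (s - 1) + (2 * l 1).natAbs + ∑ j ∈ Finset.Icc 1 (n - s), ((o j).natAbs - 1) ∧
    G.leadingCoeff = -((α + β) / 2) * (2 * l 1).sign * ∏ i ∈ Finset.Icc 2 s, (- l i) := by
  have hl1 : l 1 ≠ 0 := hl 1 (by simp; omega)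
  set p : ℤ := 2 * l 1 with hp_def
  have hp : p ≠ 0 := by simp [hp_def, hl1]
  have hpN : 2 ≤ p.natAbs := by rw [hp_def]; omega
  set c : ℤ := (α + β) / 2 with hc_def
  have hc : c ≠ 0 := by rw [hc_def]; omega
  set A : ℤ := ∏ i ∈ Finset.Icc 2 s, (- l i) with hA_def
  have hA : A ≠ 0 := by
    rw [hA_def]
    refine Finset.prod_ne_zero_iff.mpr ?_
    intro i hi
    simp only [Finset.mem_Icc] at hi
    exact neg_ne_zero.mpr (hl i (by simp; omega))
  have ho' : ∀ j ∈ Finset.Icc 1 (n - s), o j ≠ 0 ∧ 3 ≤ (o j).natAbs := by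
    intro j hj
    have h := (ho j hj).2
    rw [Int.abs_eq_natAbs] at h
    constructor <;> omega
  set P : Polynomial ℤ := ∏ j ∈ Finset.Icc 1 (n - s), conwayZ (o j) with hP_def
  set D : ℕ := ∑ j ∈ Finset.Icc 1 (n - s), ((o j).natAbs - 1) with hD_def
  have hPne : P ≠ 0 := by
    rw [hP_def]
    exact Finset.prod_ne_zero_iff.mpr fun j hj => conwayZ_ne_zero (ho' j hj).1
  have hPdeg : P.natDegree = D := by
    rw [hP_def, natDegree_prod _ _ fun j hj => conwayZ_ne_zero (ho' j hj).1, hD_def]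
    exact Finset.sum_congr rfl fun j hj => conwayZ_natDegree (ho' j hj).1
  have hPlc : P.leadingCoeff = 1 := by
    rw [hP_def, leadingCoeff_prod]
    exact Finset.prod_eq_one fun j hj => conwayZ_leadingCoeff_odd (ho j hj).1
  -- the Q = conwayZ p * P main factor
  have hQne : conwayZ p * P ≠ 0 := mul_ne_zero (conwayZ_ne_zero hp) hPne
  have hQdeg : (conwayZ p * P).natDegree = (p.natAbs - 1) + D := by
    rw [natDegree_mul (conwayZ_ne_zero hp) hPne, conwayZ_natDegree hp, hPdeg]
  have hQlc : (conwayZ p * P).leadingCoeff = p.sign := by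
    rw [leadingCoeff_mul, hPlc, mul_one]
    exact conwayZ_leadingCoeff_even hp ⟨l 1, by rw [hp_def]; ring⟩
  have hxs : (X : Polynomial ℤ) ^ (s - 1) * X = X ^ s := by
    rw [← pow_succ]; congr 1; omega
  set c2 : ℤ := ∑ i ∈ Finset.Icc 2 s, ∏ j ∈ (Finset.Icc 2 s).erase i, (- l j) with hc2_def
  have key : G = C (-(c * A)) * (X ^ s * (conwayZ p * P))
      + (C A * X ^ (s - 1) *
          (conwayZ (p.sign * (|p| - 1)) * P
           + conwayZ p * ∑ j ∈ Finset.Icc 1 (n - s),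
               conwayZ ((o j).sign * (|o j| - 1)) *
                 ∏ k ∈ (Finset.Icc 1 (n - s)).erase j, conwayZ (o k))
         + C c2 * X ^ (s - 2)) := by
    rw [hG, ← hxs]
    simp only [map_neg, map_mul]
    ring
  -- degree and lc of the main term M
  have hcA : -(c * A) ≠ 0 := neg_ne_zero.mpr (mul_ne_zero hc hA)
  have hMdeg : (C (-(c * A)) * (X ^ s * (conwayZ p * P))).natDegree = s + ((p.natAbs - 1) + D) := by
    rw [natDegree_C_mul hcA, natDegree_mul (pow_ne_zero s X_ne_zero) hQne, natDegree_X_pow, hQdeg]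
  have hMlc : (C (-(c * A)) * (X ^ s * (conwayZ p * P))).leadingCoeff = -(c * A) * p.sign := by
    rw [leadingCoeff_mul, leadingCoeff_mul, leadingCoeff_C, leadingCoeff_X_pow, one_mul, hQlc]
  -- bound the remainder R
  have hT2 : (conwayZ (p.sign * (|p| - 1)) * P).natDegree ≤ (p.natAbs - 2) + D := by
    refine (natDegree_mul_le).trans ?_
    have h1 : (p.sign * (|p| - 1)).natAbs = p.natAbs - 1 := by
      rw [Int.natAbs_mul, Int.natAbs_sign_of_ne_zero hp, one_mul, Int.abs_eq_natAbs]
      omega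
    have := conwayZ_natDegree_le (p.sign * (|p| - 1))
    rw [h1] at this
    rw [hPdeg]
    omega
  have hS : (∑ j ∈ Finset.Icc 1 (n - s),
      conwayZ ((o j).sign * (|o j| - 1)) *
        ∏ k ∈ (Finset.Icc 1 (n - s)).erase j, conwayZ (o k)).natDegree ≤ D - 1 := by
    refine natDegree_sum_le_of_forall_le _ _ ?_
    intro j hj
    refine (natDegree_mul_le).trans ?_
    have ha := (ho' j hj).2
    have h1 : ((o j).sign * (|o j| - 1)).natAbs = (o j).natAbs - 1 := by
      rw [Int.natAbs_mul, Int.natAbs_sign_of_ne_zero (ho' j hj).1, one_mul, Int.abs_eq_natAbs]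
      omega
    have hb := conwayZ_natDegree_le ((o j).sign * (|o j| - 1))
    rw [h1] at hb
    have hc' : (∏ k ∈ (Finset.Icc 1 (n - s)).erase j, conwayZ (o k)).natDegree ≤
        ∑ k ∈ (Finset.Icc 1 (n - s)).erase j, ((o k).natAbs - 1) := by
      refine (natDegree_prod_le _ _).trans ?_
      exact Finset.sum_le_sum fun k _ => conwayZ_natDegree_le (o k)
    have hsum : (∑ k ∈ (Finset.Icc 1 (n - s)).erase j, ((o k).natAbs - 1))
        + ((o j).natAbs - 1) = D := by
      rw [hD_def]
      exact Finset.sum_erase_add _ _ hj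
    omega
  have hT3 : (conwayZ p * ∑ j ∈ Finset.Icc 1 (n - s),
      conwayZ ((o j).sign * (|o j| - 1)) *
        ∏ k ∈ (Finset.Icc 1 (n - s)).erase j, conwayZ (o k)).natDegree
      ≤ (p.natAbs - 1) + (D - 1) := by
    refine (natDegree_mul_le).trans ?_
    have := conwayZ_natDegree_le p
    omega
  have hRlt : (C A * X ^ (s - 1) *
          (conwayZ (p.sign * (|p| - 1)) * P
           + conwayZ p * ∑ j ∈ Finset.Icc 1 (n - s),
               conwayZ ((o j).sign * (|o j| - 1)) *
                 ∏ k ∈ (Finset.Icc 1 (n - s)).erase j, conwayZ (o k))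
         + C c2 * X ^ (s - 2)).natDegree < s + ((p.natAbs - 1) + D) := by
    refine (natDegree_add_le _ _).trans_lt (max_lt ?_ ?_)
    · refine (natDegree_mul_le).trans_lt ?_
      have h1 : (C A * X ^ (s - 1)).natDegree ≤ s - 1 := by
        refine (natDegree_mul_le).trans ?_
        simp
      have h2 := (natDegree_add_le _ _).trans (max_le_max hT2 hT3)
      omega
    · refine (natDegree_mul_le).trans_lt ?_
      have : (C c2).natDegree = 0 := natDegree_C _
      have h3 : ((X : Polynomial ℤ) ^ (s - 2)).natDegree = s - 2 := natDegree_X_pow _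
      omega
  have hGdeg : G.natDegree = s + ((p.natAbs - 1) + D) := by
    rw [key, natDegree_add_eq_left_of_natDegree_lt (by rw [hMdeg]; exact hRlt), hMdeg]
  have hGlc : G.leadingCoeff = -(c * A) * p.sign := by
    rw [key, leadingCoeff_add_of_degree_lt' (degree_lt_degree (by rw [hMdeg]; exact hRlt)), hMlc]
  constructor
  · rw [hGdeg]; omega
  · rw [hGlc]; ring
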